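/- Let (X, π) be a finite symmetric two-player game with relative payoff game (X, Δ). If (X, Δ) is a generalized ordinal potential game, i.e., there exists P : X × X → ℝ such that for all y ∈ X and all x, x' ∈ X, Δ(x, y) − Δ(x', y) > 0 implies P(x, y) − P(x', y) > 0 and Δ(x, y) − Δ(x', y) > 0 implies P(y, x) − P(y, x') > 0, then imitation is not subject to a money pump. -/

import Mathlib

/-!
Antisymmetry of `Δ` together with the two potential conditions gives, whenever `Δ a b > 0`,
`P b b < P b a < P a a`. So every time the imitator switches from `b` to `a` the diagonal
potential `P y y` strictly increases, hence the imitator never switches to the same action twice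
and at most `|X|` terms of the sum are positive, each bounded by `max Δ`.
-/

/-- The imitator's action sequence: `y₀` initially; imitate the opponent's previous
action iff it earned a strictly positive relative payoff. -/
noncomputable def imitSeq {X : Type*} (Δ : X → X → ℝ) (x : ℕ → X) (y0 : X) : ℕ → X
  | 0 => y0
  | t + 1 => if 0 < Δ (x t) (imitSeq Δ x y0 t) then x t else imitSeq Δ x y0 t

/-- Imitation is not subject to a money pump: there is a uniform bound `M` on the sum
of the opponent's relative payoffs, for every initial action of the imitator, every
opponent sequence, and every horizon. -/
def NoMoneyPump {X : Type*} (Δ : X → X → ℝ) : Prop :=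
  ∃ M : ℝ, ∀ (y0 : X) (x : ℕ → X) (T : ℕ),
    ∑ t ∈ Finset.range (T + 1), Δ (x t) (imitSeq Δ x y0 t) ≤ M

open Finset

def IsGenOrdinalPotential {X : Type*} (Δ P : X → X → ℝ) : Prop :=
  ∀ y x x' : X, (0 < Δ x y - Δ x' y → 0 < P x y - P x' y) ∧
    (0 < Δ x y - Δ x' y → 0 < P y x - P y x')

theorem IsGenOrdinalPotential.diag_lt_diag {X : Type*} {Δ P : X → X → ℝ}
    (hP : IsGenOrdinalPotential Δ P) (hanti : ∀ a b, Δ a b = -Δ b a) {a b : X}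
    (h : 0 < Δ a b) : P b b < P a a := by
  have hdiag : ∀ z, Δ z z = 0 := fun z => by linarith [hanti z z]
  have hba : P b b < P b a := by
    have := (hP b a b).2 (by rw [hdiag]; linarith)
    linarith
  have haa : P b a < P a a := by
    have := (hP a a b).1 (by rw [hdiag, hanti b a]; linarith)
    linarith
  exact hba.trans haa

theorem sum_le_card_filter_pos_nsmul {ι M : Type*} [AddCommGroup M] [LinearOrder M]
    [IsOrderedAddMonoid M] (s : Finset ι) (f : ι → M) {C : M} (hC : ∀ i ∈ s, f i ≤ C) :
    ∑ i ∈ s, f i ≤ #{i ∈ s | 0 < f i} • C := by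
  classical
  calc ∑ i ∈ s, f i ≤ ∑ i ∈ s, if 0 < f i then C else 0 := by
        refine sum_le_sum fun i hi => ?_
        split_ifs with hpos
        · exact hC i hi
        · exact not_lt.mp hpos
    _ = #{i ∈ s | 0 < f i} • C := by rw [← sum_filter, sum_const]

section imitSeq

variable {X : Type*} {Δ : X → X → ℝ} {x : ℕ → X} {y0 : X}

theorem imitSeq_succ_of_pos {t : ℕ} (h : 0 < Δ (x t) (imitSeq Δ x y0 t)) :
    imitSeq Δ x y0 (t + 1) = x t :=
  if_pos h

theorem imitSeq_succ_of_not_pos {t : ℕ} (h : ¬0 < Δ (x t) (imitSeq Δ x y0 t)) :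
    imitSeq Δ x y0 (t + 1) = imitSeq Δ x y0 t :=
  if_neg h

variable {Q : X → ℝ} (hQ : ∀ a b, 0 < Δ a b → Q b < Q a)
include hQ

theorem lt_comp_imitSeq_succ {t : ℕ} (h : 0 < Δ (x t) (imitSeq Δ x y0 t)) :
    Q (imitSeq Δ x y0 t) < Q (imitSeq Δ x y0 (t + 1)) := by
  rw [imitSeq_succ_of_pos h]
  exact hQ _ _ h

theorem monotone_comp_imitSeq : Monotone fun t => Q (imitSeq Δ x y0 t) := by
  refine monotone_nat_of_le_succ fun t => ?_
  by_cases h : 0 < Δ (x t) (imitSeq Δ x y0 t)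
  · exact (lt_comp_imitSeq_succ hQ h).le
  · rw [imitSeq_succ_of_not_pos h]

theorem strictMonoOn_comp_imitSeq_succ :
    StrictMonoOn (fun t => Q (imitSeq Δ x y0 (t + 1)))
      {t | 0 < Δ (x t) (imitSeq Δ x y0 t)} := fun _ _ _ ht hst =>
  (monotone_comp_imitSeq hQ hst).trans_lt (lt_comp_imitSeq_succ hQ ht)

theorem card_filter_imitation_switch_le [Fintype X] (s : Finset ℕ) :
    #{t ∈ s | 0 < Δ (x t) (imitSeq Δ x y0 t)} ≤ Fintype.card X := by
  refine card_le_card_of_injOn (fun t => imitSeq Δ x y0 (t + 1)) (fun _ _ => mem_univ _) ?_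
  refine Set.InjOn.of_comp (g := Q) ((strictMonoOn_comp_imitSeq_succ hQ).injOn.mono ?_)
  intro t ht
  exact (mem_filter.mp ht).2

end imitSeq

theorem stmt12_general {X : Type*} [Fintype X]
    (π : X → X → ℝ) (Δ : X → X → ℝ) (hΔ : ∀ x y, Δ x y = π x y - π y x)
    (P : X → X → ℝ)
    (hP : ∀ y x x' : X, (0 < Δ x y - Δ x' y → 0 < P x y - P x' y) ∧
      (0 < Δ x y - Δ x' y → 0 < P y x - P y x')) :
    NoMoneyPump Δ := by
  have hanti : ∀ a b, Δ a b = -Δ b a := fun a b => by rw [hΔ, hΔ]; ring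
  have hQ : ∀ a b, 0 < Δ a b → P b b < P a a := fun _ _ =>
    IsGenOrdinalPotential.diag_lt_diag hP hanti
  obtain ⟨C, hC⟩ := Finite.bddAbove_range fun p : X × X => Δ p.1 p.2
  refine ⟨Fintype.card X • max C 0, fun y0 x T => ?_⟩
  calc ∑ t ∈ range (T + 1), Δ (x t) (imitSeq Δ x y0 t)
      ≤ #{t ∈ range (T + 1) | 0 < Δ (x t) (imitSeq Δ x y0 t)} • max C 0 :=
        sum_le_card_filter_pos_nsmul _ _ fun t _ =>
          (hC ⟨(x t, imitSeq Δ x y0 t), rfl⟩).trans (le_max_left _ _)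
    _ ≤ Fintype.card X • max C 0 :=
        nsmul_le_nsmul_left (le_max_right _ _) (card_filter_imitation_switch_le hQ _)

theorem stmt12 {X : Type*} [Fintype X] [Nonempty X]
    (π : X → X → ℝ) (Δ : X → X → ℝ) (hΔ : ∀ x y, Δ x y = π x y - π y x)
    (P : X → X → ℝ)
    (hP : ∀ y x x' : X, (0 < Δ x y - Δ x' y → 0 < P x y - P x' y) ∧
      (0 < Δ x y - Δ x' y → 0 < P y x - P y x')) :
    NoMoneyPump Δ :=
  stmt12_general π Δ hΔ P hP
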